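/- Let T be a pq-tree over a finite set U with weights w : U → ℤ, and let v be a p-node of T with children c_1, …, c_ℓ where ℓ ≥ 2. For a node c define g(c) = border(c) − max(total(c), 0), and let b_1 ≥ b_2 be the two largest values among g(c_1), …, g(c_ℓ) (attained at two distinct children). Then inner(v) = max(x, y), where x = max_{1 ≤ i ≤ ℓ} inner(c_i) and y = max(b_1, 0) + max(b_2, 0) + Σ_{i=1}^{ℓ} max(total(c_i), 0). -/

import Mathlib

/-- A pq-tree: leaves carry elements of `U`; the children of each internal node
(a p-node or a q-node) are given as a sequence. -/
inductive PQTree (U : Type) : Type where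
  | leaf : U → PQTree U
  | pnode : List (PQTree U) → PQTree U
  | qnode : List (PQTree U) → PQTree U

namespace PQTree

variable {U : Type}

/-- The list of leaves below a node, read left to right in the given order. -/
def leaves : PQTree U → List U
  | leaf u => [u]
  | pnode cs => cs.attach.flatMap (fun c => leaves c.1)
  | qnode cs => cs.attach.flatMap (fun c => leaves c.1)
  decreasing_by
  · have := List.sizeOf_lt_of_mem c.2; simp; omega
  · have := List.sizeOf_lt_of_mem c.2; simp; omega

/-- `total(v) = Σ_{u ∈ leaves(v)} w(u)`. -/
def total (w : U → ℤ) (t : PQTree U) : ℤ :=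
  ((leaves t).map w).sum

/-- `IsFrontier t l` holds when `l` is a frontier order of the pq-tree `t`: a linear order
of its leaves obtained by reading the leaves left to right after independently permuting
the children sequence of each p-node arbitrarily and either keeping or reversing the
children sequence of each q-node. -/
inductive IsFrontier : PQTree U → List U → Prop where
  | leaf (u : U) : IsFrontier (leaf u) [u]
  | pnode (cs cs' : List (PQTree U)) (fs : List (List U)) :
      cs'.Perm cs → List.Forall₂ IsFrontier cs' fs →
      IsFrontier (pnode cs) fs.flatten
  | qnodeKeep (cs : List (PQTree U)) (fs : List (List U)) :
      List.Forall₂ IsFrontier cs fs →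
      IsFrontier (qnode cs) fs.flatten
  | qnodeRev (cs : List (PQTree U)) (fs : List (List U)) :
      List.Forall₂ IsFrontier cs.reverse fs →
      IsFrontier (qnode cs) fs.flatten

variable [DecidableEq U]

/-- `S` is compatible with the pq-tree `t`: some frontier order of `t` has a contiguous
segment whose elements are exactly `S` (in particular `S = ∅` is compatible). -/
def Compatible (S : Finset U) (t : PQTree U) : Prop :=
  ∃ l l₁ l₂ l₃ : List U, IsFrontier t l ∧ l = l₁ ++ l₂ ++ l₃ ∧ l₂.toFinset = S

/-- `S` is border-compatible with the pq-tree `t`: `S` is nonempty and in some frontier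
order of `t` the elements of `S` occupy a set of consecutive positions containing the
first or the last position, i.e. `S` is a prefix or a suffix of the frontier. -/
def BorderCompatible (S : Finset U) (t : PQTree U) : Prop :=
  S.Nonempty ∧ ∃ l l₁ l₂ : List U, IsFrontier t l ∧ l = l₁ ++ l₂ ∧
    (l₁.toFinset = S ∨ l₂.toFinset = S)

/-- `inner(v)`: the maximum of `Σ_{u∈S} w(u)` over all sets `S` compatible with the
subtree at `v` (including `S = ∅`, so `inner(v) ≥ 0`). -/
noncomputable def inner (w : U → ℤ) (t : PQTree U) : ℤ :=
  sSup {z : ℤ | ∃ S : Finset U, Compatible S t ∧ z = ∑ u ∈ S, w u}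

/-- `border(v)`: the maximum of `Σ_{u∈S} w(u)` over all (nonempty) sets `S`
border-compatible with the subtree at `v`. -/
noncomputable def border (w : U → ℤ) (t : PQTree U) : ℤ :=
  sSup {z : ℤ | ∃ S : Finset U, BorderCompatible S t ∧ z = ∑ u ∈ S, w u}

/-- A well-formed pq-tree: every internal node has a nonempty sequence of children
(so every subtree has at least one leaf). -/
inductive Proper : PQTree U → Prop where
  | leaf (u : U) : Proper (leaf u)
  | pnode (cs : List (PQTree U)) : cs ≠ [] → (∀ c ∈ cs, Proper c) → Proper (pnode cs)
  | qnode (cs : List (PQTree U)) : cs ≠ [] → (∀ c ∈ cs, Proper c) → Proper (qnode cs)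

end PQTree

/-!
A segment of a frontier of a p-node either lies inside the frontier of a single child, and is
then bounded by that child's `inner`, or it is a suffix of the frontier of one child `a`, the
whole frontiers of some children, and a prefix of the frontier of another child `b`. The two
ends contribute at most `max (border) 0 = max g 0 + max total 0` each and the middle children at
most `max total 0` each, so the sum is at most `max (g a) 0 + max (g b) 0 + Σ max total 0 ≤ y`.
Conversely, the frontier listing the child attaining `b₁` with its best suffix last, then every
child of nonnegative total, then the child attaining `b₂` with its best prefix first, contains a
segment of weight `y`; and a set compatible with a child stays compatible with the p-node.
-/

open List

section

variable {α β ι M : Type*}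

theorem flatten_perm_of_forall₂ {f : α → List β} {as : List α} {fs : List (List β)}
    (h : Forall₂ (fun a l => l.Perm (f a)) as fs) : fs.flatten.Perm (as.map f).flatten := by
  induction h with
  | nil => simp
  | cons h _ ih => simpa using h.append ih

theorem sum_map_max_zero [AddCommMonoid M] [LinearOrder M] (f : α → M) (l : List α) :
    (l.map fun a => max (f a) 0).sum = ((l.filter (0 ≤ f ·)).map f).sum := by
  induction l with
  | nil => rfl
  | cons a l ih =>
    by_cases ha : 0 ≤ f a
    · simp [ha, ih]
    · simp [ha, ih, le_of_lt (not_le.1 ha)]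

theorem flatten_eq_append_cases {fs : List (List α)} {p q : List α} (h : fs.flatten = p ++ q) :
    (fs = [] ∧ p = [] ∧ q = []) ∨ ∃ fa y₁ y₂ fb,
      fs = fa ++ (y₁ ++ y₂) :: fb ∧ p = fa.flatten ++ y₁ ∧ q = y₂ ++ fb.flatten := by
  induction fs generalizing p q with
  | nil =>
    obtain ⟨rfl, rfl⟩ := append_eq_nil_iff.1 h.symm
    exact Or.inl ⟨rfl, rfl, rfl⟩
  | cons x fs ih =>
    rw [flatten_cons] at h
    rcases append_eq_append_iff.1 h with ⟨a, rfl, ha⟩ | ⟨c, rfl, rfl⟩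
    · rcases ih ha with ⟨rfl, rfl, rfl⟩ | ⟨fa, y₁, y₂, fb, rfl, rfl, rfl⟩
      · exact Or.inr ⟨[], x, [], [], by simp, by simp, by simp⟩
      · exact Or.inr ⟨x :: fa, y₁, y₂, fb, rfl, by simp, rfl⟩
    · exact Or.inr ⟨[], p, c, fs, rfl, by simp, rfl⟩

theorem flatten_eq_append_append_cases {fs : List (List α)} {l₁ l₂ l₃ : List α}
    (h : fs.flatten = l₁ ++ l₂ ++ l₃) :
    l₂ = [] ∨ (∃ fa x₁ x₃ fb, fs = fa ++ (x₁ ++ l₂ ++ x₃) :: fb) ∨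
      ∃ fa x₁ x₂ fm y₁ y₂ fb,
        fs = fa ++ (x₁ ++ x₂) :: (fm ++ (y₁ ++ y₂) :: fb) ∧ l₂ = x₂ ++ fm.flatten ++ y₁ := by
  rw [append_assoc] at h
  rcases flatten_eq_append_cases h with ⟨-, -, h₂₃⟩ | ⟨fa, y₁, y₂, fb, rfl, rfl, h₂₃⟩
  · exact Or.inl (append_eq_nil_iff.1 h₂₃).1
  rcases append_eq_append_iff.1 h₂₃ with ⟨a, rfl, rfl⟩ | ⟨c, rfl, hc⟩
  · exact Or.inr (Or.inl ⟨fa, y₁, a, fb, by simp⟩)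
  rcases flatten_eq_append_cases hc with ⟨rfl, rfl, rfl⟩ | ⟨fm, z₁, z₂, fb', rfl, rfl, rfl⟩
  · exact Or.inr (Or.inl ⟨fa, y₁, [], [], by simp⟩)
  · exact Or.inr (Or.inr ⟨fa, y₁, y₂, fm, z₁, z₂, fb', rfl, by simp⟩)

theorem forall₂_append_cons_right {R : α → β → Prop} {as : List α} {b₁ b₂ : List β} {b : β}
    (h : Forall₂ R as (b₁ ++ b :: b₂)) :
    ∃ a₁ a a₂, as = a₁ ++ a :: a₂ ∧ Forall₂ R a₁ b₁ ∧ R a b ∧ Forall₂ R a₂ b₂ := by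
  obtain ⟨a, a₂, hab, h₂, hdrop⟩ := forall₂_cons_right_iff.1 (forall₂_drop_append as _ _ h)
  exact ⟨as.take b₁.length, a, a₂, by rw [← hdrop, take_append_drop],
    forall₂_take_append as _ _ h, hab, h₂⟩

theorem max_zero_add_max_zero_le [AddCommMonoid M] [LinearOrder M] [IsOrderedAddMonoid M]
    {f : ι → M} {i j a b : ι} (hab : a ≠ b) (h₁ : ∀ t, f t ≤ f i)
    (h₂ : ∀ t, t ≠ i → f t ≤ f j) : max (f a) 0 + max (f b) 0 ≤ max (f i) 0 + max (f j) 0 := by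
  rcases eq_or_ne a i with rfl | ha
  · exact add_le_add_right (max_le_max_right 0 (h₂ b hab.symm)) _
  · rw [add_comm]
    exact add_le_add (max_le_max_right 0 (h₁ b)) (max_le_max_right 0 (h₂ a ha))

end

namespace PQTree

section

variable {U : Type}

@[simp]
theorem leaves_leaf (u : U) : leaves (leaf u) = [u] := by
  simp [leaves]

@[simp]
theorem leaves_pnode (cs : List (PQTree U)) : leaves (pnode cs) = (cs.map leaves).flatten := by
  simp [leaves, flatMap_def]

@[simp]
theorem leaves_qnode (cs : List (PQTree U)) : leaves (qnode cs) = (cs.map leaves).flatten := by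
  simp [leaves, flatMap_def]

theorem isFrontier_leaves : ∀ t : PQTree U, IsFrontier t (leaves t)
  | leaf u => by simpa using .leaf u
  | pnode cs => by
    simpa using .pnode cs cs _ (.refl _)
      (forall₂_map_right_iff.2 (forall₂_same.2 fun t _ => isFrontier_leaves t))
  | qnode cs => by
    simpa using .qnodeKeep cs _
      (forall₂_map_right_iff.2 (forall₂_same.2 fun t _ => isFrontier_leaves t))

theorem forall₂_isFrontier_map_leaves (cs : List (PQTree U)) :
    Forall₂ IsFrontier cs (cs.map leaves) :=
  forall₂_map_right_iff.2 (forall₂_same.2 fun t _ => isFrontier_leaves t)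

-- The `induction` tactic does not accept the nested inductive `IsFrontier`.
theorem IsFrontier.induction {P : PQTree U → List U → Prop} (hleaf : ∀ u, P (.leaf u) [u])
    (hpnode : ∀ cs cs' fs, cs'.Perm cs → Forall₂ P cs' fs → P (.pnode cs) fs.flatten)
    (hkeep : ∀ cs fs, Forall₂ P cs fs → P (.qnode cs) fs.flatten)
    (hrev : ∀ cs fs, Forall₂ P cs.reverse fs → P (.qnode cs) fs.flatten)
    {t : PQTree U} {l : List U} (h : IsFrontier t l) : P t l :=
  IsFrontier.rec (motive_1 := fun t l _ => P t l) (motive_2 := fun cs fs _ => Forall₂ P cs fs)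
    hleaf (fun cs cs' fs hp _ ih => hpnode cs cs' fs hp ih) (fun cs fs _ ih => hkeep cs fs ih)
    (fun cs fs _ ih => hrev cs fs ih) .nil (fun _ _ ih₁ ih₂ => .cons ih₁ ih₂) h

theorem IsFrontier.perm_leaves {t : PQTree U} {l : List U} (h : IsFrontier t l) :
    l.Perm (leaves t) := by
  refine h.induction (P := fun t l => l.Perm (leaves t)) (by simp) ?_ ?_ ?_
  · intro cs cs' fs hp ih
    simpa using (flatten_perm_of_forall₂ ih).trans (hp.map leaves).flatten
  · intro cs fs ih
    simpa using flatten_perm_of_forall₂ ih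
  · intro cs fs ih
    simpa using (flatten_perm_of_forall₂ ih).trans (cs.reverse_perm.map leaves).flatten

theorem IsFrontier.reverse {t : PQTree U} {l : List U} (h : IsFrontier t l) :
    IsFrontier t l.reverse := by
  refine h.induction (P := fun t l => IsFrontier t l.reverse) .leaf ?_ ?_ ?_
  · intro cs cs' fs hp ih
    rw [reverse_flatten]
    refine .pnode cs cs'.reverse _ (cs'.reverse_perm.trans hp) ?_
    rwa [forall₂_reverse_iff, forall₂_map_right_iff]
  · intro cs fs ih
    rw [reverse_flatten]
    refine .qnodeRev cs _ ?_
    rwa [forall₂_reverse_iff, forall₂_map_right_iff]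
  · intro cs fs ih
    rw [reverse_flatten]
    refine .qnodeKeep cs _ ?_
    rw [← forall₂_reverse_iff, reverse_reverse, forall₂_map_right_iff]
    exact ih

theorem IsFrontier.nodup {t : PQTree U} {l : List U} (h : IsFrontier t l) (hnd : (leaves t).Nodup) :
    l.Nodup :=
  h.perm_leaves.nodup_iff.2 hnd

theorem IsFrontier.sum_map {t : PQTree U} {l : List U} (h : IsFrontier t l) (w : U → ℤ) :
    (l.map w).sum = total w t :=
  (h.perm_leaves.map w).sum_eq

theorem sum_map_flatten_of_forall₂ (w : U → ℤ) {cm : List (PQTree U)} {fm : List (List U)}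
    (hm : Forall₂ IsFrontier cm fm) : (fm.flatten.map w).sum = (cm.map (total w)).sum := by
  induction hm with
  | nil => rfl
  | cons h _ ih => rw [flatten_cons, map_append, sum_append, ih, h.sum_map w]; rfl

theorem Proper.leaves_ne_nil {t : PQTree U} (h : Proper t) : leaves t ≠ [] := by
  cases h with
  | leaf u => simp
  | pnode cs hne hcs | qnode cs hne hcs =>
    obtain ⟨c, hc⟩ := exists_mem_of_ne_nil cs hne
    simpa using ⟨c, hc, (hcs c hc).leaves_ne_nil⟩
termination_by sizeOf t

theorem nodup_of_nodup_leaves_pnode {cs : List (PQTree U)} (hnd : (leaves (pnode cs)).Nodup)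
    (hne : ∀ t ∈ cs, leaves t ≠ []) : cs.Nodup := by
  rw [leaves_pnode, nodup_flatten, pairwise_map] at hnd
  refine hnd.2.imp_of_mem fun {a b} ha _ hdisj hab => ?_
  obtain ⟨u, hu⟩ := exists_mem_of_ne_nil _ (hne a ha)
  exact hdisj hu (hab ▸ hu)

theorem nodup_leaves_of_mem {cs : List (PQTree U)} (hnd : (leaves (pnode cs)).Nodup) {t : PQTree U}
    (ht : t ∈ cs) : (leaves t).Nodup := by
  rw [leaves_pnode, nodup_flatten] at hnd
  exact hnd.1 _ (mem_map_of_mem ht)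

theorem IsFrontier.pnode_segment_cases {cs : List (PQTree U)} {l₁ l₂ l₃ : List U}
    (h : IsFrontier (.pnode cs) (l₁ ++ l₂ ++ l₃)) :
    l₂ = [] ∨ (∃ t ∈ cs, ∃ x₁ x₃, IsFrontier t (x₁ ++ l₂ ++ x₃)) ∨
      ∃ ca ta cm tb cb fm x₁ x₂ y₁ y₂, (ca ++ ta :: (cm ++ tb :: cb)).Perm cs ∧
        IsFrontier ta (x₁ ++ x₂) ∧ Forall₂ IsFrontier cm fm ∧ IsFrontier tb (y₁ ++ y₂) ∧
        l₂ = x₂ ++ fm.flatten ++ y₁ := by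
  obtain ⟨cs', fs, hperm, hfs, hl⟩ : ∃ cs' fs, cs'.Perm cs ∧ Forall₂ IsFrontier cs' fs ∧
      fs.flatten = l₁ ++ l₂ ++ l₃ := by
    generalize l₁ ++ l₂ ++ l₃ = l at h
    cases h with
    | pnode _ cs' fs hperm hfs => exact ⟨cs', fs, hperm, hfs, rfl⟩
  rcases flatten_eq_append_append_cases hl with h₂ | ⟨fa, x₁, x₃, fb, rfl⟩ |
    ⟨fa, x₁, x₂, fm, y₁, y₂, fb, rfl, rfl⟩
  · exact Or.inl h₂
  · obtain ⟨ca, t, cb, rfl, -, ht, -⟩ := forall₂_append_cons_right hfs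
    exact Or.inr (Or.inl ⟨t, hperm.subset (by simp), x₁, x₃, ht⟩)
  · obtain ⟨ca, ta, cr, rfl, -, hta, hr⟩ := forall₂_append_cons_right hfs
    obtain ⟨cm, tb, cb, rfl, hm, htb, -⟩ := forall₂_append_cons_right hr
    exact Or.inr (Or.inr ⟨ca, ta, cm, tb, cb, fm, x₁, x₂, y₁, y₂, hperm, hta, hm, htb, rfl⟩)

theorem finite_setOf_sum {P : Finset U → Prop} {A : Finset U} (hP : ∀ S, P S → S ⊆ A)
    (w : U → ℤ) : {z : ℤ | ∃ S, P S ∧ z = ∑ u ∈ S, w u}.Finite := by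
  refine ((A.powerset.finite_toSet).image fun S => ∑ u ∈ S, w u).subset ?_
  rintro _ ⟨S, hS, rfl⟩
  exact ⟨S, by simpa using hP S hS, rfl⟩

variable [DecidableEq U]

theorem Compatible.subset {S : Finset U} {t : PQTree U} (h : Compatible S t) :
    S ⊆ (leaves t).toFinset := by
  obtain ⟨l, l₁, l₂, l₃, hf, rfl, rfl⟩ := h
  intro u hu
  simpa using hf.perm_leaves.subset (by simp_all : u ∈ l₁ ++ l₂ ++ l₃)

theorem BorderCompatible.subset {S : Finset U} {t : PQTree U} (h : BorderCompatible S t) :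
    S ⊆ (leaves t).toFinset := by
  obtain ⟨-, l, l₁, l₂, hf, rfl, hS⟩ := h
  intro u hu
  have : u ∈ l₁ ++ l₂ := by rcases hS with rfl | rfl <;> simp_all
  simpa using hf.perm_leaves.subset this

theorem compatible_empty (t : PQTree U) : Compatible ∅ t :=
  ⟨leaves t, leaves t, [], [], isFrontier_leaves t, by simp, rfl⟩

theorem le_inner (w : U → ℤ) {S : Finset U} {t : PQTree U} (h : Compatible S t) :
    ∑ u ∈ S, w u ≤ inner w t :=
  le_csSup (finite_setOf_sum (fun _ => Compatible.subset) w).bddAbove ⟨S, h, rfl⟩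

theorem inner_le (w : U → ℤ) {t : PQTree U} {M : ℤ}
    (h : ∀ S, Compatible S t → ∑ u ∈ S, w u ≤ M) : inner w t ≤ M :=
  csSup_le ⟨0, ∅, compatible_empty t, by simp⟩ (by rintro _ ⟨S, hS, rfl⟩; exact h S hS)

theorem inner_nonneg (w : U → ℤ) (t : PQTree U) : 0 ≤ inner w t := by
  simpa using le_inner w (compatible_empty t)

theorem le_border (w : U → ℤ) {S : Finset U} {t : PQTree U} (h : BorderCompatible S t) :
    ∑ u ∈ S, w u ≤ border w t :=
  le_csSup (finite_setOf_sum (fun _ => BorderCompatible.subset) w).bddAbove ⟨S, h, rfl⟩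

theorem Proper.exists_border_eq (w : U → ℤ) {t : PQTree U} (h : Proper t) :
    ∃ S, BorderCompatible S t ∧ border w t = ∑ u ∈ S, w u := by
  obtain ⟨u, r, hur⟩ := ne_nil_iff_exists_cons.1 h.leaves_ne_nil
  have hu : BorderCompatible {u} t :=
    ⟨by simp, leaves t, [u], r, isFrontier_leaves t, hur, Or.inl (by simp)⟩
  exact Set.Nonempty.csSup_mem (s := {z | ∃ S, BorderCompatible S t ∧ z = ∑ u ∈ S, w u})
    ⟨_, _, hu, rfl⟩ (finite_setOf_sum (fun _ => BorderCompatible.subset) w)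

theorem sum_suffix_le_border (w : U → ℤ) {t : PQTree U} {l₁ l₂ : List U}
    (h : IsFrontier t (l₁ ++ l₂)) (hnd : l₂.Nodup) : (l₂.map w).sum ≤ max (border w t) 0 := by
  rcases eq_or_ne l₂ [] with rfl | hne
  · simp
  · have hS : BorderCompatible l₂.toFinset t :=
      ⟨by simpa using hne, _, l₁, l₂, h, rfl, Or.inr rfl⟩
    exact (sum_toFinset w hnd ▸ le_border w hS).trans (le_max_left _ _)

theorem sum_prefix_le_border (w : U → ℤ) {t : PQTree U} {l₁ l₂ : List U}
    (h : IsFrontier t (l₁ ++ l₂)) (hnd : l₁.Nodup) : (l₁.map w).sum ≤ max (border w t) 0 := by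
  simpa using sum_suffix_le_border w (l₂ := l₁.reverse) (by simpa using h.reverse)
    (nodup_reverse.2 hnd)

theorem BorderCompatible.exists_suffix {S : Finset U} {t : PQTree U} (h : BorderCompatible S t) :
    ∃ l₁ l₂, IsFrontier t (l₁ ++ l₂) ∧ l₂.toFinset = S := by
  obtain ⟨-, _, l₁, l₂, hf, rfl, hS | hS⟩ := h
  · exact ⟨l₂.reverse, l₁.reverse, by simpa using hf.reverse, by simpa using hS⟩
  · exact ⟨l₁, l₂, hf, hS⟩

/-- The best suffix of a frontier is a border-compatible set, the whole frontier or nothing. -/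
theorem Proper.exists_suffix_sum_eq (w : U → ℤ) {t : PQTree U} (h : Proper t)
    (hnd : (leaves t).Nodup) : ∃ l₁ l₂, IsFrontier t (l₁ ++ l₂) ∧
      (l₂.map w).sum = max (border w t) (max (total w t) 0) := by
  by_cases hb : max (total w t) 0 ≤ border w t
  · obtain ⟨S, hS, hsum⟩ := h.exists_border_eq w
    obtain ⟨l₁, l₂, hf, rfl⟩ := hS.exists_suffix
    refine ⟨l₁, l₂, hf, ?_⟩
    rw [max_eq_left hb, hsum, sum_toFinset w (hf.nodup hnd).of_append_right]
  by_cases ht : 0 ≤ total w t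
  · exact ⟨[], leaves t, isFrontier_leaves t, by rw [total] at *; omega⟩
  · exact ⟨leaves t, [], by simpa using isFrontier_leaves t, by simp only [map_nil, sum_nil]; omega⟩

theorem Proper.exists_prefix_sum_eq (w : U → ℤ) {t : PQTree U} (h : Proper t)
    (hnd : (leaves t).Nodup) : ∃ l₁ l₂, IsFrontier t (l₁ ++ l₂) ∧
      (l₁.map w).sum = max (border w t) (max (total w t) 0) := by
  obtain ⟨l₁, l₂, hf, hsum⟩ := h.exists_suffix_sum_eq w hnd
  exact ⟨l₂.reverse, l₁.reverse, by simpa using hf.reverse, by simpa using hsum⟩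

theorem Compatible.pnode_of_mem {S : Finset U} {t : PQTree U} {cs : List (PQTree U)}
    (h : Compatible S t) (ht : t ∈ cs) : Compatible S (pnode cs) := by
  classical
  obtain ⟨_, l₁, l₂, l₃, hf, rfl, rfl⟩ := h
  have hfront := IsFrontier.pnode cs _ _ (perm_cons_erase ht).symm
    (.cons hf (forall₂_isFrontier_map_leaves (cs.erase t)))
  exact ⟨_, l₁, l₂, l₃ ++ ((cs.erase t).map leaves).flatten, hfront, by simp, rfl⟩

theorem inner_le_inner_pnode (w : U → ℤ) {t : PQTree U} {cs : List (PQTree U)} (ht : t ∈ cs) :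
    inner w t ≤ inner w (pnode cs) :=
  inner_le w fun _ hS => le_inner w (hS.pnode_of_mem ht)

theorem le_inner_pnode (w : U → ℤ) {cs : List (PQTree U)} (hnd : (leaves (pnode cs)).Nodup)
    {ta tb : PQTree U} (hta : ta ∈ cs) (htb : tb ∈ cs) (hne : ta ≠ tb) (hpa : Proper ta)
    (hpb : Proper tb) :
    max (border w ta - max (total w ta) 0) 0 + max (border w tb - max (total w tb) 0) 0 +
      (cs.map fun t => max (total w t) 0).sum ≤ inner w (pnode cs) := by
  classical
  set rest := (cs.erase ta).erase tb
  have hperm : cs.Perm (ta :: tb :: rest) := (perm_cons_erase hta).trans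
    ((perm_cons_erase ((mem_erase_of_ne hne.symm).2 htb)).cons ta)
  obtain ⟨x₁, x₂, hfa, hsa⟩ := hpa.exists_suffix_sum_eq w (nodup_leaves_of_mem hnd hta)
  obtain ⟨y₁, y₂, hfb, hsb⟩ := hpb.exists_prefix_sum_eq w (nodup_leaves_of_mem hnd htb)
  set pos := rest.filter (0 ≤ total w ·)
  set neg := rest.filter fun t => !decide (0 ≤ total w t)
  have hperm' : (ta :: (pos ++ tb :: neg)).Perm cs :=
    (perm_middle.cons ta).trans ((((filter_append_perm _ rest).cons tb).cons ta).trans hperm.symm)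
  have hfront : IsFrontier (pnode cs)
      (x₁ ++ (x₂ ++ (pos.map leaves).flatten ++ y₁) ++ (y₂ ++ (neg.map leaves).flatten)) := by
    simpa using IsFrontier.pnode cs _ _ hperm' (.cons hfa (rel_append
      (forall₂_isFrontier_map_leaves pos) (.cons hfb (forall₂_isFrontier_map_leaves neg))))
  have hseg := (infix_append _ _ _).sublist.nodup (hfront.nodup hnd)
  have hsum := le_inner w ⟨_, _, _, _, hfront, rfl, rfl⟩
  rw [sum_toFinset w hseg] at hsum
  have hpos : ((pos.map leaves).flatten.map w).sum = (rest.map fun t => max (total w t) 0).sum := by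
    rw [sum_map_max_zero, map_flatten, sum_flatten, map_map, map_map]
    rfl
  have hsplit := (hperm.map fun t => max (total w t) 0).sum_eq
  simp only [map_append, sum_append, map_cons, sum_cons, hsa, hsb, hpos] at hsum hsplit
  omega

theorem sum_le_of_compatible_pnode (w : U → ℤ) {cs : List (PQTree U)}
    (hnd : (leaves (pnode cs)).Nodup) (hcs : cs.Nodup) {S : Finset U}
    (hS : Compatible S (pnode cs)) :
    S = ∅ ∨ (∃ t ∈ cs, Compatible S t) ∨ ∃ ta ∈ cs, ∃ tb ∈ cs, ta ≠ tb ∧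
      ∑ u ∈ S, w u ≤ max (border w ta - max (total w ta) 0) 0 +
        max (border w tb - max (total w tb) 0) 0 + (cs.map fun t => max (total w t) 0).sum := by
  obtain ⟨_, l₁, l₂, l₃, hf, rfl, rfl⟩ := hS
  rcases hf.pnode_segment_cases with rfl | ⟨t, ht, x₁, x₃, hft⟩ |
    ⟨ca, ta, cm, tb, cb, fm, x₁, x₂, y₁, y₂, hperm, hta, hm, htb, rfl⟩
  · exact Or.inl rfl
  · exact Or.inr (Or.inl ⟨t, ht, _, x₁, l₂, x₃, hft, rfl, rfl⟩)
  have hseg := (infix_append _ _ _).sublist.nodup (hf.nodup hnd)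
  have hne : ta ≠ tb := fun h =>
    (nodup_cons.1 (hperm.nodup_iff.2 hcs).of_append_right).1 (h ▸ by simp)
  refine Or.inr (Or.inr ⟨ta, hperm.subset (by simp), tb, hperm.subset (by simp), hne, ?_⟩)
  have hx := sum_suffix_le_border w hta hseg.of_append_left.of_append_left
  have hy := sum_prefix_le_border w htb hseg.of_append_right
  have hmid : (cm.map (total w)).sum ≤ (cm.map fun t => max (total w t) 0).sum :=
    sum_le_sum fun _ _ => le_max_left _ _
  have hca : 0 ≤ (ca.map fun t => max (total w t) 0).sum := sum_nonneg (by simp)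
  have hcb : 0 ≤ (cb.map fun t => max (total w t) 0).sum := sum_nonneg (by simp)
  have hsplit := (hperm.map fun t => max (total w t) 0).sum_eq
  rw [sum_toFinset w hseg]
  simp only [map_append, sum_append, map_cons, sum_cons, sum_map_flatten_of_forall₂ w hm]
    at hsplit ⊢
  have : 0 ≤ max (total w ta) 0 := le_max_right _ _
  have : 0 ≤ max (total w tb) 0 := le_max_right _ _
  omega

end

theorem inner_pnode_general {U : Type} [DecidableEq U] (w : U → ℤ) (ℓ : ℕ)
    (c : Fin ℓ → PQTree U) (hp : Proper (pnode (List.ofFn c)))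
    (hnd : (leaves (pnode (List.ofFn c))).Nodup)
    (b₁ b₂ : ℤ)
    (htop : ∃ i j : Fin ℓ, i ≠ j ∧
      b₁ = border w (c i) - max (total w (c i)) 0 ∧
      b₂ = border w (c j) - max (total w (c j)) 0 ∧
      (∀ t : Fin ℓ, border w (c t) - max (total w (c t)) 0 ≤ b₁) ∧
      (∀ t : Fin ℓ, t ≠ i → border w (c t) - max (total w (c t)) 0 ≤ b₂)) :
    inner w (pnode (List.ofFn c)) =
      max
        (sSup {z : ℤ | ∃ i : Fin ℓ, z = inner w (c i)})
        (max b₁ 0 + max b₂ 0 + ∑ i : Fin ℓ, max (total w (c i)) 0) := by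
  obtain ⟨i, j, hij, rfl, rfl, hg₁, hg₂⟩ := htop
  have hproper : ∀ t ∈ List.ofFn c, Proper t := by
    cases hp with | pnode _ _ hcs => exact hcs
  have hcs := nodup_of_nodup_leaves_pnode hnd fun t ht => (hproper t ht).leaves_ne_nil
  have hle_sSup : ∀ k, inner w (c k) ≤ sSup {z : ℤ | ∃ i : Fin ℓ, z = inner w (c i)} := fun k =>
    le_csSup ((Set.finite_range _).bddAbove.mono (by rintro _ ⟨k, rfl⟩; exact ⟨k, rfl⟩)) ⟨k, rfl⟩
  have hM : ((List.ofFn c).map fun t => max (total w t) 0).sum = ∑ k, max (total w (c k)) 0 := by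
    rw [List.map_ofFn, List.sum_ofFn]; rfl
  apply le_antisymm
  · refine inner_le w fun S hS => ?_
    rcases sum_le_of_compatible_pnode w hnd hcs hS with rfl | ⟨t, ht, hSt⟩ |
      ⟨ta, hta, tb, htb, hne, hsum⟩
    · simpa using le_max_of_le_left ((inner_nonneg w (c i)).trans (hle_sSup i))
    · obtain ⟨k, rfl⟩ := List.mem_ofFn.1 ht
      exact le_max_of_le_left ((le_inner w hSt).trans (hle_sSup k))
    · obtain ⟨ka, rfl⟩ := List.mem_ofFn.1 hta
      obtain ⟨kb, rfl⟩ := List.mem_ofFn.1 htb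
      have := max_zero_add_max_zero_le (ne_of_apply_ne c hne) hg₁ hg₂
      rw [hM] at hsum
      exact le_max_of_le_right (by linarith)
  · refine max_le (csSup_le ⟨_, i, rfl⟩ ?_) ?_
    · rintro _ ⟨k, rfl⟩
      exact inner_le_inner_pnode w (List.mem_ofFn.2 ⟨k, rfl⟩)
    · rw [← hM]
      exact le_inner_pnode w hnd (List.mem_ofFn.2 ⟨i, rfl⟩) (List.mem_ofFn.2 ⟨j, rfl⟩)
        ((List.nodup_ofFn.1 hcs).ne hij) (hproper _ (List.mem_ofFn.2 ⟨i, rfl⟩))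
        (hproper _ (List.mem_ofFn.2 ⟨j, rfl⟩))

/-- **Lemma: `inner` at a p-node.** For a p-node `v` with children
`c_1, …, c_ℓ` (`ℓ ≥ 2`), write `g(c) = border(c) − max(total(c), 0)` and let `b₁ ≥ b₂` be
the two largest values among `g(c_1), …, g(c_ℓ)`, attained at two distinct children.
Then `inner(v) = max(x, y)` where `x = max_i inner(c_i)` and
`y = max(b₁, 0) + max(b₂, 0) + Σ_i max(total(c_i), 0)`. -/
theorem inner_pnode {U : Type} [DecidableEq U] (w : U → ℤ) (ℓ : ℕ) (hℓ : 2 ≤ ℓ)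
    (c : Fin ℓ → PQTree U) (hp : Proper (pnode (List.ofFn c)))
    (hnd : (leaves (pnode (List.ofFn c))).Nodup)
    (b₁ b₂ : ℤ) (hb : b₂ ≤ b₁)
    (htop : ∃ i j : Fin ℓ, i ≠ j ∧
      b₁ = border w (c i) - max (total w (c i)) 0 ∧
      b₂ = border w (c j) - max (total w (c j)) 0 ∧
      (∀ t : Fin ℓ, border w (c t) - max (total w (c t)) 0 ≤ b₁) ∧
      (∀ t : Fin ℓ, t ≠ i → border w (c t) - max (total w (c t)) 0 ≤ b₂)) :
    inner w (pnode (List.ofFn c)) =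
      max
        (sSup {z : ℤ | ∃ i : Fin ℓ, z = inner w (c i)})
        (max b₁ 0 + max b₂ 0 + ∑ i : Fin ℓ, max (total w (c i)) 0) :=
  inner_pnode_general w ℓ c hp hnd b₁ b₂ htop

end PQTree
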